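/- For any Boolean function F : {0,1}^n → {0,1} and any k ≥ 1, γ_{1,k}(F) = γ_{1,1}(F): degree-1 polynomials over ℤ/2^kℤ approximate F no better than affine functions over 𝔽₂. -/

import Mathlib

/-- Evaluation of the multilinear polynomial with coefficients `c` at the Boolean point `x`. -/
def evalML {n k : ℕ} (c : Finset (Fin n) → ZMod (2 ^ k)) (x : Fin n → Bool) : ZMod (2 ^ k) :=
  ∑ S : Finset (Fin n), c S * ∏ i ∈ S, (if x i then 1 else 0)

/-- The `k`-lift of a Boolean function: `0 ↦ 0`, `1 ↦ 2^{k-1} ∈ ℤ/2^kℤ`. -/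
def lift {n : ℕ} (k : ℕ) (F : (Fin n → Bool) → Bool) (x : Fin n → Bool) : ZMod (2 ^ k) :=
  if F x then 2 ^ (k - 1) else 0

/-- The number of Boolean points where `P` agrees with the `k`-lift of `F`. -/
def agrCount {n : ℕ} (k : ℕ) (F : (Fin n → Bool) → Bool)
    (c : Finset (Fin n) → ZMod (2 ^ k)) : ℕ :=
  (Finset.univ.filter (fun x : Fin n → Bool => evalML c x = lift k F x)).card

/-- `gamma n d k F` is the maximum, over multilinear polynomials of degree at most `d`
over `ℤ/2^kℤ`, of the number of points of agreement with the `k`-lift of `F`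
(so `γ_{d,k}(F)` equals `gamma n d k F / 2^n`). -/
def gamma (n d k : ℕ) (F : (Fin n → Bool) → Bool) : ℕ :=
  (Finset.univ.filter
      (fun c : Finset (Fin n) → ZMod (2 ^ k) => ∀ S, c S ≠ 0 → S.card ≤ d)).sup
    (agrCount k F)


/-! Both values of the `k`-lift lie in the subgroup `{0, 2^(k-1)}` of `ℤ/2^kℤ`, the image of `𝔽₂`
under `a ↦ a • 2^(k-1)`. If an affine `P` agrees with `F_k` at two points that differ only in
coordinate `i`, the coefficient of `x_i` lies in this subgroup. So either some linear coefficient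
lies outside it, and then `P` agrees with `F_k` on at most one point of each such pair, i.e. on
at most half of the cube, which one of the two constants over `𝔽₂` already achieves; or all linear
coefficients, and through any agreement point also the constant term, lie in it, and `P` is the
image of an affine polynomial over `𝔽₂` with the same agreement set. -/

open Finset

section Polynomials

variable {n d k : ℕ}

lemma le_gamma {F : (Fin n → Bool) → Bool} {c : Finset (Fin n) → ZMod (2 ^ k)}
    (hc : ∀ S, c S ≠ 0 → #S ≤ d) : agrCount k F c ≤ gamma n d k F :=
  le_sup (mem_filter.2 ⟨mem_univ c, hc⟩)

lemma gamma_le {F : (Fin n → Bool) → Bool} {m : ℕ}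
    (h : ∀ c : Finset (Fin n) → ZMod (2 ^ k), (∀ S, c S ≠ 0 → #S ≤ d) → agrCount k F c ≤ m) :
    gamma n d k F ≤ m :=
  Finset.sup_le fun c hc => h c (mem_filter.1 hc).2

lemma evalML_map {m : ℕ} (f : ZMod (2 ^ m) →+ ZMod (2 ^ k))
    (c : Finset (Fin n) → ZMod (2 ^ m)) (x : Fin n → Bool) :
    evalML (fun S => f (c S)) x = f (evalML c x) := by
  simp only [evalML, map_sum, prod_boole, mul_ite, mul_one, mul_zero, apply_ite f, map_zero]

lemma evalML_pi_single_empty (a : ZMod (2 ^ k)) (x : Fin n → Bool) :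
    evalML (Pi.single ∅ a) x = a := by
  simp [evalML, Pi.single_apply]

lemma evalML_of_degree_le_one {c : Finset (Fin n) → ZMod (2 ^ k)} (hc : ∀ S, c S ≠ 0 → #S ≤ 1)
    (x : Fin n → Bool) : evalML c x = c ∅ + ∑ i, if x i then c {i} else 0 := by
  have hsub : insert ∅ (univ.map ⟨singleton, singleton_injective⟩) ⊆
      (univ : Finset (Finset (Fin n))) := subset_univ _
  rw [evalML, ← sum_subset hsub, sum_insert, sum_map]
  · simp
  · simp
  · intro S _ hS
    have hcard : 1 < #S := by
      simp only [mem_insert, mem_map, mem_univ, true_and, not_or] at hS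
      by_contra! h
      interval_cases hS' : #S
      · exact hS.1 (card_eq_zero.1 hS')
      · obtain ⟨i, rfl⟩ := card_eq_one.1 hS'
        exact hS.2 ⟨i, rfl⟩
    rw [not_imp_comm.1 (hc S) (by omega), zero_mul]

end Polynomials

section HalfEmbedding

variable {k : ℕ}

lemma two_pow_pred_add_self (k : ℕ) : (2 ^ (k - 1) : ZMod (2 ^ k)) + 2 ^ (k - 1) = 0 := by
  rcases k with _ | k
  · exact Subsingleton.elim (α := ZMod 1) _ _
  · rw [← two_mul, ← pow_succ', Nat.add_sub_cancel]
    exact_mod_cast ZMod.natCast_self (2 ^ (k + 1))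

lemma two_pow_pred_ne_zero (hk : 1 ≤ k) : (2 ^ (k - 1) : ZMod (2 ^ k)) ≠ 0 := by
  have h : ¬ 2 ^ k ∣ 2 ^ (k - 1) := by
    rw [Nat.pow_dvd_pow_iff_le_right one_lt_two]
    omega
  exact_mod_cast (ZMod.natCast_eq_zero_iff _ _).not.2 h

def halfEmbedding (k : ℕ) : ZMod (2 ^ 1) →+ ZMod (2 ^ k) :=
  ZMod.lift (2 ^ 1) ⟨zmultiplesHom _ (2 ^ (k - 1)), by
    simpa [← two_mul] using two_pow_pred_add_self k⟩

lemma halfEmbedding_one : halfEmbedding k 1 = 2 ^ (k - 1) := by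
  rw [halfEmbedding, ← Int.cast_one, ZMod.lift_coe]
  simp

lemma halfEmbedding_injective (hk : 1 ≤ k) : Function.Injective (halfEmbedding k) := by
  rw [injective_iff_map_eq_zero]
  intro a ha
  fin_cases a
  · rfl
  · exact absurd (halfEmbedding_one ▸ ha) (two_pow_pred_ne_zero hk)

end HalfEmbedding

lemma two_mul_card_le_of_involutive {α : Type*} [Fintype α] {σ : α → α}
    (hσ : Function.Involutive σ) {A : Finset α} (hA : ∀ x ∈ A, σ x ∉ A) :
    2 * #A ≤ Fintype.card α := by
  have hdisj : Disjoint A (A.map ⟨σ, hσ.injective⟩) := by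
    simp only [disjoint_left, mem_map, Function.Embedding.coeFn_mk, not_exists, not_and]
    intro x hx y hy hyx
    exact hA y hy (hyx ▸ hx)
  calc 2 * #A = #(A.disjUnion _ hdisj) := by rw [card_disjUnion, card_map, two_mul]
    _ ≤ Fintype.card α := card_le_univ _

section Agreement

variable {n k : ℕ} {F : (Fin n → Bool) → Bool}

lemma lift_eq_halfEmbedding (F : (Fin n → Bool) → Bool) (x : Fin n → Bool) :
    lift k F x = halfEmbedding k (lift 1 F x) := by
  cases h : F x <;> simp [lift, h]
  exact halfEmbedding_one.symm

lemma lift_mem_range_halfEmbedding (F : (Fin n → Bool) → Bool) (x : Fin n → Bool) :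
    lift k F x ∈ (halfEmbedding k).range :=
  ⟨_, (lift_eq_halfEmbedding F x).symm⟩

lemma agrCount_halfEmbedding (hk : 1 ≤ k) (c : Finset (Fin n) → ZMod (2 ^ 1)) :
    agrCount k F (fun S => halfEmbedding k (c S)) = agrCount 1 F c := by
  simp only [agrCount, evalML_map, lift_eq_halfEmbedding (k := k) F,
    (halfEmbedding_injective hk).eq_iff]

lemma two_pow_le_two_mul_gamma (F : (Fin n → Bool) → Bool) : 2 ^ n ≤ 2 * gamma n 1 1 F := by
  have hconst (a : ZMod (2 ^ 1)) : agrCount 1 F (Pi.single ∅ a) ≤ gamma n 1 1 F :=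
    le_gamma fun S hS => by
      rw [Pi.single_apply] at hS
      simp [show S = ∅ by by_contra h; simp [h] at hS]
  have hsplit : agrCount 1 F (Pi.single ∅ 1) + agrCount 1 F (Pi.single ∅ 0) = 2 ^ n := by
    have hlift (x : Fin n → Bool) : lift 1 F x = if F x then 1 else 0 := by simp [lift]
    simp only [agrCount, evalML_pi_single_empty, hlift]
    simpa using card_filter_add_card_filter_not (s := univ) (fun x => F x = true)
  have := hconst 0
  have := hconst 1
  omega

variable {c : Finset (Fin n) → ZMod (2 ^ k)}

lemma evalML_update_not_sub (hc : ∀ S, c S ≠ 0 → #S ≤ 1) (x : Fin n → Bool) (i : Fin n) :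
    evalML c (Function.update x i (!x i)) - evalML c x = if x i then -c {i} else c {i} := by
  rw [evalML_of_degree_le_one hc, evalML_of_degree_le_one hc, add_sub_add_left_eq_sub,
    ← sum_sub_distrib, sum_eq_single i]
  · cases x i <;> simp
  · intro j _ hj
    simp [Function.update_of_ne hj]
  · simp

lemma coeff_singleton_mem_of_agree (hc : ∀ S, c S ≠ 0 → #S ≤ 1) {x : Fin n → Bool} {i : Fin n}
    (hx : evalML c x = lift k F x)
    (hx' : evalML c (Function.update x i (!x i)) = lift k F (Function.update x i (!x i))) :
    c {i} ∈ (halfEmbedding k).range := by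
  have h := sub_mem (lift_mem_range_halfEmbedding (k := k) F (Function.update x i (!x i)))
    (lift_mem_range_halfEmbedding F x)
  rw [← hx, ← hx', evalML_update_not_sub hc] at h
  split_ifs at h
  · exact neg_mem_iff.1 h
  · exact h

lemma two_mul_agrCount_le_of_coeff_not_mem (hc : ∀ S, c S ≠ 0 → #S ≤ 1) {i : Fin n}
    (hi : c {i} ∉ (halfEmbedding k).range) : 2 * agrCount k F c ≤ 2 ^ n := by
  have hσ : Function.Involutive fun x : Fin n → Bool => Function.update x i (!x i) := by
    intro x
    simp
  have hpair : ∀ x ∈ univ.filter (fun x => evalML c x = lift k F x),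
      Function.update x i (!x i) ∉ univ.filter (fun x => evalML c x = lift k F x) :=
    fun x hx hx' =>
      hi (coeff_singleton_mem_of_agree hc (mem_filter.1 hx).2 (mem_filter.1 hx').2)
  simpa [agrCount] using two_mul_card_le_of_involutive hσ hpair

lemma coeff_mem_of_agree (hc : ∀ S, c S ≠ 0 → #S ≤ 1)
    (hlin : ∀ i, c {i} ∈ (halfEmbedding k).range) {x : Fin n → Bool}
    (hx : evalML c x = lift k F x) (S : Finset (Fin n)) : c S ∈ (halfEmbedding k).range := by
  have hempty : c ∅ ∈ (halfEmbedding k).range := by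
    rw [← add_sub_cancel_right (c ∅) (∑ i, if x i then c {i} else 0),
      ← evalML_of_degree_le_one hc, hx]
    refine sub_mem (lift_mem_range_halfEmbedding F x) (sum_mem fun i _ => ?_)
    split_ifs
    exacts [hlin i, zero_mem _]
  by_cases hS : c S = 0
  · exact hS ▸ zero_mem _
  have hcard := hc S hS
  interval_cases h : #S
  · rwa [card_eq_zero.1 h]
  · obtain ⟨i, rfl⟩ := card_eq_one.1 h
    exact hlin i

lemma agrCount_le_gamma_one_of_coeff_mem (hk : 1 ≤ k) (hc : ∀ S, c S ≠ 0 → #S ≤ 1)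
    (hall : ∀ S, c S ∈ (halfEmbedding k).range) : agrCount k F c ≤ gamma n 1 1 F := by
  choose c' hc' using hall
  have hc'_eq : (fun S => halfEmbedding k (c' S)) = c := funext hc'
  rw [← hc'_eq, agrCount_halfEmbedding hk]
  refine le_gamma fun S hS => hc S ?_
  rwa [← hc', (halfEmbedding_injective hk).ne_iff' (map_zero _)]

end Agreement

/-- Degree-1 polynomials over `ℤ/2^kℤ` approximate `F` no better than affine functions
over `𝔽₂`: `γ_{1,k}(F) = γ_{1,1}(F)`. -/
theorem stmt11 (n k : ℕ) (hk : 1 ≤ k) (F : (Fin n → Bool) → Bool) :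
    gamma n 1 k F = gamma n 1 1 F := by
  refine le_antisymm (gamma_le fun c hc => ?_) (gamma_le fun c hc => ?_)
  · by_cases hlin : ∀ i, c {i} ∈ (halfEmbedding k).range
    · by_cases hagree : ∃ x, evalML c x = lift k F x
      · obtain ⟨x, hx⟩ := hagree
        exact agrCount_le_gamma_one_of_coeff_mem hk hc (coeff_mem_of_agree hc hlin hx)
      · push Not at hagree
        simp [agrCount, hagree]
    · push Not at hlin
      obtain ⟨i, hi⟩ := hlin
      have := two_mul_agrCount_le_of_coeff_not_mem (F := F) hc hi
      have := two_pow_le_two_mul_gamma F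
      omega
  · rw [← agrCount_halfEmbedding hk]
    exact le_gamma fun S hS => hc S fun h => hS (by rw [h, map_zero])
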